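/- arXiv:1401.5958 — 3 statements merged into one kernel-verified Lean document; each statement's English description precedes it below -/
import Mathlib

section
/- For all non-negative integers n, p, q, r: ∑_{j=0}^{p} (-1)^j * C(n+p+q+1, p-j) * C(q+j, j) * s_r(n+r+q+1+j, r+q+1+j) = C(n+p+q+1, n) * r^{\overline{n}}, where r^{\overline{n}} = r(r+1)⋯(r+n-1) is the rising factorial and s_r is the unsigned r-Stirling number of the first kind. -/
/-!
`s_r(n + k + r, k + r)` is the elementary symmetric polynomial `eₙ(r, …, r + m - 1)`
with `m = n + k`. As a function of `m` it vanishes for `m < n`, equals `r^(n)` at `m = n`, and has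
degree at most `2n` since its forward difference is `(r + m) · eₙ₋₁(r, …, r + m - 1)`. Newton's
forward-difference formula therefore writes it as a combination of the `C(m, e)` with
`n ≤ e ≤ 2n`, the coefficient of `C(m, n)` being `r^(n)`. By trinomial revision and the
Chu–Vandermonde identity at the negative argument `-(q + 1)`, the alternating sum sends
`C(n + q + 1 + j, e)` to `C(n + p + q + 1, e) · C(n + p - e, p)`, which vanishes for
`n < e ≤ n + p`; as `2n ≤ n + p`, only `e = n` survives.
-/

/-- The unsigned `r`-Stirling number of the first kind. -/
def rStirling1 (r : ℕ) : ℕ → ℕ → ℕ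
  | 0, k => if r = 0 ∧ k = 0 then 1 else 0
  | n + 1, k =>
    if n + 1 < r then 0
    else if n + 1 = r then (if k = r then 1 else 0)
    else (if k = 0 then 0 else rStirling1 r n (k - 1)) + n * rStirling1 r n k

/-- The `r`-Stirling number of the second kind. -/
def rStirling2 (r : ℕ) : ℕ → ℕ → ℕ
  | 0, k => if r = 0 ∧ k = 0 then 1 else 0
  | n + 1, k =>
    if n + 1 < r then 0
    else if n + 1 = r then (if k = r then 1 else 0)
    else (if k = 0 then 0 else rStirling2 r n (k - 1)) + k * rStirling2 r n k

open Finset fwdDiff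

section ForwardDifference

theorem fwdDiff_natCast_add_mul {R : Type*} [CommRing R] (c : R) (g : ℕ → R) :
    Δ_[1] (fun x : ℕ ↦ (c + x) * g x) = fun x ↦ (c + 1 + x) * Δ_[1] g x + g x := by
  ext x
  simp only [fwdDiff, Nat.cast_add, Nat.cast_one]
  ring

theorem fwdDiff_iter_natCast_add_mul_eq_zero {R : Type*} [CommRing R] {g : ℕ → R} {d : ℕ}
    (hg : Δ_[1] ^[d] g = 0) (c : R) : Δ_[1] ^[d + 1] (fun x : ℕ ↦ (c + x) * g x) = 0 := by
  induction d generalizing c g with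
  | zero =>
    subst hg
    ext x
    simp [fwdDiff]
  | succ d ih =>
    have hg' : Δ_[1] ^[d] (Δ_[1] g) = 0 := by rwa [← Function.iterate_succ_apply]
    rw [Function.iterate_succ_apply, fwdDiff_natCast_add_mul]
    change Δ_[1] ^[d + 1] ((fun x : ℕ ↦ (c + 1 + x) * Δ_[1] g x) + g) = 0
    rw [fwdDiff_iter_add, ih hg', hg, add_zero]

variable {G : Type*} [AddCommGroup G] {f : ℕ → G} {a : ℕ}

theorem fwdDiff_iter_eq_zero_of_le {d k : ℕ} (hf : Δ_[1] ^[d] f = 0) (hk : d ≤ k) :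
    Δ_[1] ^[k] f = 0 := by
  obtain ⟨j, rfl⟩ := Nat.exists_eq_add_of_le' hk
  rw [Function.iterate_add_apply, hf]
  clear hk
  induction j with
  | zero => rfl
  | succ j ih =>
    rw [Function.iterate_succ_apply', ih]
    ext
    simp [fwdDiff]

theorem fwdDiff_iter_apply_zero_of_lt (hf : ∀ m < a, f m = 0) {k : ℕ} (hk : k < a) :
    Δ_[1] ^[k] f 0 = 0 := by
  rw [fwdDiff_iter_eq_sum_shift]
  refine sum_eq_zero fun i hi ↦ ?_
  rw [zero_add, smul_eq_mul, mul_one, hf i (by simp at hi; omega), smul_zero]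

theorem fwdDiff_iter_apply_zero_self (hf : ∀ m < a, f m = 0) : Δ_[1] ^[a] f 0 = f a := by
  rw [fwdDiff_iter_eq_sum_shift, sum_range_succ, sum_eq_zero fun i hi ↦ ?_]
  · simp
  · rw [zero_add, smul_eq_mul, mul_one, hf i (by simpa using hi), smul_zero]

theorem eq_sum_Icc_choose_smul_fwdDiff_iter {b : ℕ} (hlow : ∀ m < a, f m = 0)
    (hdeg : Δ_[1] ^[b + 1] f = 0) (m : ℕ) :
    f m = ∑ k ∈ Icc a b, m.choose k • Δ_[1] ^[k] f 0 := by
  have newton := shift_eq_sum_fwdDiff_iter 1 f m 0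
  rw [zero_add, smul_eq_mul, mul_one] at newton
  rw [newton]
  refine (sum_subset inter_subset_left ?_).symm.trans (sum_subset inter_subset_right ?_)
  · intro k _ hk
    rcases lt_or_ge k a with hka | hak
    · rw [fwdDiff_iter_apply_zero_of_lt hlow hka, smul_zero]
    · rw [fwdDiff_iter_eq_zero_of_le hdeg (by simp_all), Pi.zero_apply, smul_zero]
  · intro k _ hk
    rw [Nat.choose_eq_zero_of_lt (by simp_all), zero_smul]

end ForwardDifference

theorem Nat.add_choose_sub_mul_add_choose (M P j e : ℕ) (hj : j ≤ P) :
    (M + P).choose (P - j) * (M + j).choose e = (M + P).choose e * (M + P - e).choose (P - j) := by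
  by_cases he : e ≤ M + j
  · rw [Nat.choose_symm_of_eq_add (show M + P = (P - j) + (M + j) by omega), Nat.choose_mul he,
      Nat.choose_symm_of_eq_add (show M + P - e = (P - j) + (M + j - e) by omega)]
  · rw [Nat.choose_eq_zero_of_lt (not_le.mp he), mul_zero]
    rcases le_or_gt e (M + P) with hP | hP
    · rw [Nat.choose_eq_zero_of_lt (by omega : M + P - e < P - j), mul_zero]
    · rw [Nat.choose_eq_zero_of_lt hP, zero_mul]

theorem Ring.choose_neg_natCast_add_one (q j : ℕ) :
    Ring.choose (-((q + 1 : ℕ) : ℤ)) j = (-1) ^ j * (q + j).choose j := by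
  rw [Ring.choose_neg, Units.smul_def, Int.coe_negOnePow_natCast, smul_eq_mul,
    show ((q + 1 : ℕ) : ℤ) + j - 1 = ((q + j : ℕ) : ℤ) by push_cast; ring, Ring.choose_natCast]

theorem sum_range_neg_one_pow_mul_choose_mul_choose (a q p : ℕ) :
    ∑ j ∈ range (p + 1), (-1 : ℤ) ^ j * (a + q + 1).choose (p - j) * (q + j).choose j =
      a.choose p := by
  have vandermonde := Ring.add_choose_eq (r := ((a + q + 1 : ℕ) : ℤ)) (s := -((q + 1 : ℕ) : ℤ)) p
    (Commute.all _ _)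
  rw [show ((a + q + 1 : ℕ) : ℤ) + -((q + 1 : ℕ) : ℤ) = a by push_cast; ring, Ring.choose_natCast,
    ← Nat.sum_antidiagonal_swap, Nat.sum_antidiagonal_eq_sum_range_succ_mk] at vandermonde
  rw [vandermonde]
  refine sum_congr rfl fun j _ ↦ ?_
  rw [Prod.fst_swap, Prod.snd_swap, Ring.choose_natCast, Ring.choose_neg_natCast_add_one]
  ring

theorem sum_neg_one_pow_mul_choose_mul_choose_mul_choose {n p q e : ℕ} (he : e ≤ n + p) :
    ∑ j ∈ range (p + 1), (-1 : ℤ) ^ j * (n + p + q + 1).choose (p - j) * (q + j).choose j *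
      (n + q + 1 + j).choose e = (n + p + q + 1).choose e * (n + p - e).choose p := by
  rw [← sum_range_neg_one_pow_mul_choose_mul_choose (n + p - e) q p, mul_sum]
  refine sum_congr rfl fun j hj ↦ ?_
  have revision := Nat.add_choose_sub_mul_add_choose (n + q + 1) p j e
    (by simpa [Nat.lt_succ_iff] using hj)
  rw [show n + q + 1 + p = n + p + q + 1 by ring,
    show n + p + q + 1 - e = n + p - e + q + 1 by omega] at revision
  have revision_int := congrArg (Nat.cast : ℕ → ℤ) revision
  push_cast at revision_int
  linear_combination (-1 : ℤ) ^ j * ((q + j).choose j : ℤ) * revision_int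

theorem sum_neg_one_pow_mul_choose_mul_choose_mul_apply {f : ℕ → ℤ} {n p : ℕ} (hnp : n ≤ p)
    (hlow : ∀ m < n, f m = 0) (hdeg : Δ_[1] ^[2 * n + 1] f = 0) (q : ℕ) :
    ∑ j ∈ range (p + 1), (-1 : ℤ) ^ j * (n + p + q + 1).choose (p - j) * (q + j).choose j *
      f (n + q + 1 + j) = (n + p + q + 1).choose n * f n := by
  calc _ = ∑ j ∈ range (p + 1), ∑ e ∈ Icc n (2 * n), (-1 : ℤ) ^ j *
          (n + p + q + 1).choose (p - j) * (q + j).choose j * (n + q + 1 + j).choose e *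
            Δ_[1] ^[e] f 0 := by
        refine sum_congr rfl fun j _ ↦ ?_
        rw [eq_sum_Icc_choose_smul_fwdDiff_iter hlow hdeg, mul_sum]
        simp only [nsmul_eq_mul, mul_assoc]
    _ = ∑ e ∈ Icc n (2 * n),
          (n + p + q + 1).choose e * (n + p - e).choose p * Δ_[1] ^[e] f 0 := by
        rw [sum_comm]
        refine sum_congr rfl fun e he ↦ ?_
        rw [← sum_mul, sum_neg_one_pow_mul_choose_mul_choose_mul_choose (by simp at he; omega)]
    _ = (n + p + q + 1).choose n * f n := by
        rw [sum_eq_single_of_mem n (by simp; omega), Nat.add_sub_cancel_left, Nat.choose_self,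
          fwdDiff_iter_apply_zero_self hlow, Nat.cast_one, mul_one]
        intro e he hne
        rw [Nat.choose_eq_zero_of_lt (by simp at he; omega : n + p - e < p)]
        simp

theorem rStirling1_eq_zero_of_lt_r {r k : ℕ} (h : k < r) (n : ℕ) : rStirling1 r n k = 0 := by
  induction n generalizing k with
  | zero => simp [rStirling1]; omega
  | succ n ih =>
    simp only [rStirling1, ih h, mul_zero, add_zero]
    split_ifs <;> first | rfl | omega | exact ih (by omega)

theorem rStirling1_eq_zero_of_lt (r : ℕ) {n k : ℕ} (h : n < k) : rStirling1 r n k = 0 := by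
  induction n generalizing k with
  | zero => simp [rStirling1]; omega
  | succ n ih =>
    simp only [rStirling1, ih (by omega : n < k), mul_zero, add_zero]
    split_ifs <;> first | rfl | omega | exact ih (by omega)

theorem rStirling1_self (r : ℕ) : rStirling1 r r r = 1 := by
  cases r <;> simp [rStirling1]

theorem rStirling1_succ_succ {r N : ℕ} (h : r ≤ N) (K : ℕ) :
    rStirling1 r (N + 1) (K + 1) = rStirling1 r N K + N * rStirling1 r N (K + 1) := by
  rw [rStirling1, if_neg (by omega), if_neg (by omega), if_neg (by omega)]
  rfl

theorem rStirling1_succ_r {r N : ℕ} (h : r ≤ N) :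
    rStirling1 r (N + 1) r = N * rStirling1 r N r := by
  rw [rStirling1, if_neg (by omega), if_neg (by omega)]
  split_ifs with hr
  · simp
  · rw [rStirling1_eq_zero_of_lt_r (by omega), zero_add]

theorem rStirling1_diag (r k : ℕ) : rStirling1 r (k + r) (k + r) = 1 := by
  induction k with
  | zero => simpa using rStirling1_self r
  | succ k ih =>
    rw [show k + 1 + r = k + r + 1 by omega, rStirling1_succ_succ (by omega), ih,
      rStirling1_eq_zero_of_lt r (by omega), mul_zero, add_zero]

/-- `shiftedEsymm r n m` is the elementary symmetric polynomial `eₙ(r, r + 1, …, r + m - 1)`. -/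
def shiftedEsymm (r : ℕ) : ℕ → ℕ → ℤ
  | 0, _ => 1
  | _ + 1, 0 => 0
  | n + 1, m + 1 => shiftedEsymm r (n + 1) m + (r + m) * shiftedEsymm r n m

theorem shiftedEsymm_eq_zero_of_lt (r : ℕ) {n m : ℕ} (h : m < n) : shiftedEsymm r n m = 0 := by
  induction m generalizing n with
  | zero =>
    obtain ⟨n, rfl⟩ := Nat.exists_eq_succ_of_ne_zero (by omega : n ≠ 0)
    rfl
  | succ m ih =>
    obtain ⟨n, rfl⟩ := Nat.exists_eq_succ_of_ne_zero (by omega : n ≠ 0)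
    rw [shiftedEsymm, ih (by omega), ih (by omega), mul_zero, add_zero]

theorem shiftedEsymm_succ_self (r n : ℕ) :
    shiftedEsymm r (n + 1) (n + 1) = (r + n) * shiftedEsymm r n n := by
  rw [shiftedEsymm, shiftedEsymm_eq_zero_of_lt r (Nat.lt_succ_self n), zero_add]

theorem shiftedEsymm_self (r n : ℕ) : shiftedEsymm r n n = ∏ i ∈ range n, ((r : ℤ) + i) := by
  induction n with
  | zero => rfl
  | succ n ih => rw [shiftedEsymm_succ_self, ih, prod_range_succ, mul_comm]

theorem fwdDiff_iter_shiftedEsymm_eq_zero (r n : ℕ) :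
    Δ_[1] ^[2 * n + 1] (shiftedEsymm r n) = 0 := by
  induction n with
  | zero =>
    ext
    simp [fwdDiff, shiftedEsymm]
  | succ n ih =>
    have hdiff : Δ_[1] (shiftedEsymm r (n + 1)) = fun m : ℕ ↦ (r + m) * shiftedEsymm r n m := by
      ext m
      simp [fwdDiff, shiftedEsymm]
    rw [show 2 * (n + 1) + 1 = 2 * n + 2 + 1 by ring, Function.iterate_succ_apply, hdiff,
      fwdDiff_iter_natCast_add_mul_eq_zero (fwdDiff_iter_eq_zero_of_le ih (by omega))]

theorem rStirling1_add_add_eq_shiftedEsymm (r n k : ℕ) :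
    (rStirling1 r (n + k + r) (k + r) : ℤ) = shiftedEsymm r n (n + k) := by
  induction n generalizing k with
  | zero => simp [rStirling1_diag, shiftedEsymm]
  | succ n ihn =>
    induction k with
    | zero =>
      have h := ihn 0
      simp only [add_zero, zero_add] at h ⊢
      rw [show n + 1 + r = n + r + 1 by omega, rStirling1_succ_r (by omega),
        shiftedEsymm_succ_self, ← h]
      push_cast
      ring
    | succ k ihk =>
      have h := ihn (k + 1)
      rw [show n + (k + 1) + r = n + 1 + k + r by omega, show n + (k + 1) = n + 1 + k by omega,
        show k + 1 + r = k + r + 1 by omega] at h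
      rw [show n + 1 + (k + 1) + r = n + 1 + k + r + 1 by omega,
        show k + 1 + r = k + r + 1 by omega, show n + 1 + (k + 1) = n + 1 + k + 1 by omega,
        rStirling1_succ_succ (by omega), shiftedEsymm]
      push_cast
      rw [ihk, h]
      ring

theorem rStirling1_rising_factorial_identity (n p q r : ℕ) (hp : n ≤ p) :
    ∑ j ∈ Finset.range (p + 1),
      (-1 : ℤ) ^ j * ((n + p + q + 1).choose (p - j)) * ((q + j).choose j) *
        rStirling1 r (n + r + q + 1 + j) (r + q + 1 + j)
    = ((n + p + q + 1).choose n : ℤ) * ∏ i ∈ Finset.range n, ((r : ℤ) + i) := by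
  have hE (j : ℕ) : (rStirling1 r (n + r + q + 1 + j) (r + q + 1 + j) : ℤ) =
      shiftedEsymm r n (n + q + 1 + j) := by
    rw [show n + r + q + 1 + j = n + (q + 1 + j) + r by ring,
      show r + q + 1 + j = q + 1 + j + r by ring, rStirling1_add_add_eq_shiftedEsymm,
      ← add_assoc, ← add_assoc]
  simp_rw [hE]
  rw [sum_neg_one_pow_mul_choose_mul_choose_mul_apply hp
    (fun m hm ↦ shiftedEsymm_eq_zero_of_lt r hm) (fwdDiff_iter_shiftedEsymm_eq_zero r n),
    shiftedEsymm_self]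
end

section
/- For all non-negative integers n, p, q, r with p ≥ n: ∑_{j=0}^{p} (-1)^j * C(n+p+q+1, p-j) * C(q+j, j) * S_r(n+r+q+1+j, r+q+1+j) = C(n+p+q+1, n) * r^n, where S_r is the r-Stirling number of the second kind. -/
/-!
Write `V n m = S_r(n + r + m, r + m)` (`shiftedRStirling2`); then `V 0 m = 1`,
`V (n+1) 0 = r V n 0` and `V (n+1) (m+1) = V (n+1) m + (r + m + 1) V n (m+1)`. Put
`Z n p s = ∑_{j ≤ p} (-1)^j C(n+p+s, p-j) C(s+j, j) V n (s+j)` (`stirlingAltSum`). Pascal's rule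
in both binomials, the absorption identity `(j+1) C(s+j+1, j+1) = (s+1) C(s+j+1, j)` and the
recurrence of `V` give linear recurrences expressing `Z (n+1)` through `Z n`, while `Z 0 p s` is
the coefficient of `x^p` in `(1+x)^(p-1)`; hence `Z n p s = 0` whenever `p > n`.

With `w = p + q + 1`, the left-hand side is the partial antidiagonal sum
`∑_{a ≤ p} Z n a (w-a)`. As `p ≥ n`, the terms with `p < a ≤ w` vanish, and the full
antidiagonal sum collapses, after exchanging the order of summation, via
`∑_k (-1)^k C(m, k) = [m = 0]` to `C(n+w, w) V n 0 = C(n+w, n) r^n`.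
-/

open Finset

section AltChooseSum

variable {R : Type*} [CommRing R]

/-- The coefficient of `x ^ p` in `(1 + x) ^ M * ∑ j, f j * (-x) ^ j`. -/
def altChooseSum (M p : ℕ) (f : ℕ → R) : R :=
  ∑ j ∈ range (p + 1), (-1) ^ j * (M.choose (p - j) : R) * f j

def chooseShift (s : ℕ) (g : ℕ → R) (j : ℕ) : R :=
  ((s + j).choose j : R) * g (s + j)

theorem altChooseSum_add (M p : ℕ) (f g : ℕ → R) :
    altChooseSum M p (fun j => f j + g j) = altChooseSum M p f + altChooseSum M p g := by
  simp only [altChooseSum, mul_add, sum_add_distrib]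

theorem altChooseSum_const_mul (M p : ℕ) (c : R) (f : ℕ → R) :
    altChooseSum M p (fun j => c * f j) = c * altChooseSum M p f := by
  simp only [altChooseSum, mul_sum]
  exact sum_congr rfl fun _ _ => by ring

theorem altChooseSum_zero (M : ℕ) (f : ℕ → R) : altChooseSum M 0 f = f 0 := by
  simp [altChooseSum]

theorem altChooseSum_succ_left (M p : ℕ) (f : ℕ → R) :
    altChooseSum (M + 1) (p + 1) f = altChooseSum M (p + 1) f + altChooseSum M p f := by
  simp only [altChooseSum]
  rw [sum_range_succ _ (p + 1), sum_range_succ _ (p + 1), add_right_comm, ← sum_add_distrib]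
  congr 1
  · refine sum_congr rfl fun j hj => ?_
    rw [show p + 1 - j = p - j + 1 by grind, Nat.choose_succ_succ', Nat.cast_add]
    ring
  · simp

theorem altChooseSum_succ_of_eq_add {M p : ℕ} {f u v : ℕ → R} (h0 : f 0 = u 0)
    (hsucc : ∀ j, f (j + 1) = u (j + 1) + v j) :
    altChooseSum M (p + 1) f = altChooseSum M (p + 1) u - altChooseSum M p v := by
  simp only [altChooseSum]
  rw [sum_range_succ', sum_range_succ' _ (p + 1), h0, ← sub_add_eq_add_sub, ← sum_sub_distrib]
  congr 1
  refine sum_congr rfl fun j _ => ?_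
  rw [hsucc, Nat.add_sub_add_right, pow_succ]
  ring

theorem altChooseSum_succ_succ_of_eq_add {M p : ℕ} {f u v : ℕ → R} (h0 : f 0 = u 0)
    (hsucc : ∀ j, f (j + 1) = u (j + 1) + f j + v j) :
    altChooseSum (M + 1) (p + 1) f = altChooseSum M (p + 1) u - altChooseSum M p v := by
  rw [altChooseSum_succ_left, altChooseSum_succ_of_eq_add (v := fun j => f j + v j) h0
    (fun j => by rw [hsucc, add_assoc]), altChooseSum_add]
  ring

theorem altChooseSum_one (m p : ℕ) : altChooseSum (m + 1) p (fun _ => (1 : R)) = m.choose p := by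
  have h := congrArg (Int.cast : ℤ → R)
    (Int.alternating_sum_range_choose_eq_choose (n := m) (m := p))
  push_cast at h
  have hsq : ∀ k : ℕ, ((-1 : R) ^ k) * (-1) ^ k = 1 := fun k => by
    rw [← mul_pow, neg_one_mul, neg_neg, one_pow]
  rw [altChooseSum, ← sum_range_reflect]
  calc ∑ j ∈ range (p + 1),
        (-1) ^ (p + 1 - 1 - j) * ((m + 1).choose (p - (p + 1 - 1 - j)) : R) * 1
      = (-1) ^ p * ∑ k ∈ range (p + 1), (-1) ^ k * ((m + 1).choose k : R) := by
        rw [mul_sum]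
        refine sum_congr rfl fun k hk => ?_
        obtain ⟨i, rfl⟩ := Nat.exists_eq_add_of_le (Nat.lt_succ_iff.mp (mem_range.mp hk))
        rw [Nat.add_sub_cancel, Nat.add_sub_cancel_left, Nat.add_sub_cancel, pow_add]
        linear_combination (-(-1) ^ i * ((m + 1).choose k : R)) * hsq k
    _ = m.choose p := by rw [h, ← mul_assoc, hsq, one_mul]

theorem altChooseSum_choose_add (m s p : ℕ) :
    altChooseSum (m + s + 1) p (fun j => ((s + j).choose j : R)) = m.choose p := by
  induction s generalizing m p with
  | zero => simpa using altChooseSum_one m p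
  | succ s ihs =>
    induction p with
    | zero => simp [altChooseSum_zero]
    | succ p ihp =>
      rw [altChooseSum_succ_of_eq_add (u := fun j => ((s + j).choose j : R))
        (v := fun j => ((s + 1 + j).choose j : R)) (by simp) (fun j => by
          rw [show s + 1 + (j + 1) = s + (j + 1) + 1 by ring, Nat.choose_succ_succ', Nat.cast_add,
            add_comm, show s + 1 + j = s + (j + 1) by ring]),
        show m + (s + 1) + 1 = m + 1 + s + 1 by ring, ihs,
        ← show m + (s + 1) + 1 = m + 1 + s + 1 by ring, ihp, Nat.choose_succ_succ', Nat.cast_add]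
      ring

theorem sum_altChooseSum_chooseShift_sub (N w : ℕ) (g : ℕ → R) :
    ∑ a ∈ range (w + 1), altChooseSum N a (chooseShift (w - a) g) = N.choose w * g 0 := by
  have alt (n : ℕ) :
      ∑ k ∈ range (n + 1), (-1) ^ k * (n.choose k : R) = if n = 0 then 1 else 0 := by
    simpa using congrArg (Int.cast : ℤ → R) (Int.alternating_sum_range_choose (n := n))
  calc ∑ a ∈ range (w + 1), altChooseSum N a (chooseShift (w - a) g)
      = ∑ a ∈ range (w + 1), ∑ i ∈ range (a + 1),
          (-1) ^ (a - i) * (N.choose i : R) * ((w - i).choose (a - i) : R) * g (w - i) := by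
        refine sum_congr rfl fun a ha => ?_
        rw [altChooseSum, ← sum_range_reflect]
        refine sum_congr rfl fun i hi => ?_
        have : i ≤ a := Nat.lt_succ_iff.mp (mem_range.mp hi)
        have : a ≤ w := Nat.lt_succ_iff.mp (mem_range.mp ha)
        rw [chooseShift, Nat.add_sub_cancel, Nat.sub_sub_self ‹i ≤ a›,
          show w - a + (a - i) = w - i by omega]
        ring
    _ = ∑ i ∈ range (w + 1), ∑ k ∈ range (w + 1 - i),
          (-1) ^ k * (N.choose i : R) * ((w - i).choose k : R) * g (w - i) :=
        sum_range_diag_flip (w + 1) fun i k =>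
          (-1) ^ k * (N.choose i : R) * ((w - i).choose k : R) * g (w - i)
    _ = ∑ i ∈ range (w + 1), (N.choose i : R) * g (w - i) * if w - i = 0 then 1 else 0 := by
        refine sum_congr rfl fun i hi => ?_
        rw [← alt, mul_sum, show w + 1 - i = w - i + 1 by have := mem_range.mp hi; omega]
        exact sum_congr rfl fun k _ => by ring
    _ = N.choose w * g 0 := by
        rw [sum_range_succ, sum_eq_zero fun i hi => by
          rw [if_neg (by have := mem_range.mp hi; omega), mul_zero]]
        simp

theorem altChooseSum_chooseShift_comp_succ (N p q : ℕ) (g : ℕ → R) :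
    altChooseSum N p (chooseShift q fun m => g (m + 1)) =
      ∑ a ∈ range (p + 1), altChooseSum N a (chooseShift (p + q + 1 - a) g) := by
  induction p generalizing q with
  | zero => simp [altChooseSum_zero, chooseShift]
  | succ p ih =>
    have key := altChooseSum_succ_of_eq_add (M := N) (p := p) (f := chooseShift (q + 1) g)
      (u := chooseShift q fun m => g (m + 1)) (v := chooseShift (q + 1) fun m => g (m + 1))
      (by simp [chooseShift]) (fun j => by
        simp only [chooseShift]
        rw [show q + 1 + (j + 1) = q + (j + 1) + 1 by ring, Nat.choose_succ_succ', Nat.cast_add,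
          show q + 1 + j = q + (j + 1) by ring]
        ring)
    rw [eq_sub_iff_add_eq] at key
    rw [← key, ih, sum_range_succ _ (p + 1), add_comm,
      show p + (q + 1) + 1 = p + 1 + q + 1 by ring, show p + 1 + q + 1 - (p + 1) = q + 1 by omega]

end AltChooseSum

theorem rStirling2_succ_succ {r N : ℕ} (h : r ≤ N) (k : ℕ) :
    rStirling2 r (N + 1) (k + 1) = rStirling2 r N k + (k + 1) * rStirling2 r N (k + 1) := by
  rw [rStirling2, if_neg (by omega), if_neg (by omega), if_neg k.succ_ne_zero, Nat.add_sub_cancel]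

theorem rStirling2_eq_zero_of_lt_r {r k : ℕ} (hk : k < r) (N : ℕ) : rStirling2 r N k = 0 := by
  induction N generalizing k with
  | zero => simp [rStirling2]; omega
  | succ N ih =>
    rw [rStirling2]
    split_ifs <;> simp_all [ih (show k - 1 < r by omega)]

theorem rStirling2_eq_zero_of_lt {r N k : ℕ} (h : N < k) : rStirling2 r N k = 0 := by
  induction N generalizing k with
  | zero => simp [rStirling2]; omega
  | succ N ih =>
    rw [rStirling2]
    split_ifs <;> simp_all [ih (show N < k - 1 by omega), ih (show N < k by omega)]

theorem rStirling2_add_self (r m : ℕ) : rStirling2 r (r + m) (r + m) = 1 := by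
  induction m with
  | zero => cases r <;> simp [rStirling2]
  | succ m ih =>
    rw [← add_assoc, rStirling2_succ_succ (Nat.le_add_right r m), ih,
      rStirling2_eq_zero_of_lt (Nat.lt_succ_self _), mul_zero, add_zero]

section ShiftedRStirling2

variable (r : ℕ)

def shiftedRStirling2 (n m : ℕ) : ℤ := rStirling2 r (n + r + m) (r + m)

theorem shiftedRStirling2_zero_left (m : ℕ) : shiftedRStirling2 r 0 m = 1 := by
  simp [shiftedRStirling2, rStirling2_add_self]

theorem shiftedRStirling2_succ_succ (n m : ℕ) :
    shiftedRStirling2 r (n + 1) (m + 1) =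
      shiftedRStirling2 r (n + 1) m + (r + m + 1) * shiftedRStirling2 r n (m + 1) := by
  simp only [shiftedRStirling2]
  rw [show n + 1 + r + (m + 1) = n + r + (m + 1) + 1 by ring, ← add_assoc r m 1,
    rStirling2_succ_succ (by omega), show n + r + (m + 1) = n + 1 + r + m by ring]
  push_cast
  ring

theorem shiftedRStirling2_succ_zero (n : ℕ) :
    shiftedRStirling2 r (n + 1) 0 = r * shiftedRStirling2 r n 0 := by
  simp only [shiftedRStirling2, add_zero]
  rcases r with _ | r
  · simp [rStirling2]
  · rw [show n + 1 + (r + 1) = n + (r + 1) + 1 by ring, rStirling2_succ_succ (by omega),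
      rStirling2_eq_zero_of_lt_r (Nat.lt_succ_self r)]
    push_cast
    ring

theorem shiftedRStirling2_zero_right (n : ℕ) : shiftedRStirling2 r n 0 = (r : ℤ) ^ n := by
  induction n with
  | zero => exact shiftedRStirling2_zero_left r 0
  | succ n ih => rw [shiftedRStirling2_succ_zero, ih, pow_succ, mul_comm]

theorem chooseShift_shiftedRStirling2_succ (n s j : ℕ) :
    chooseShift s (shiftedRStirling2 r (n + 1)) (j + 1) =
      (s + j).choose (j + 1) * shiftedRStirling2 r (n + 1) (s + j) +
        (r + s) * chooseShift s (shiftedRStirling2 r n) (j + 1) +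
        chooseShift s (shiftedRStirling2 r (n + 1)) j +
        (s + 1) * chooseShift (s + 1) (shiftedRStirling2 r n) j := by
  have hpascal :
      ((s + j + 1).choose (j + 1) : ℤ) = (s + j).choose j + (s + j).choose (j + 1) := by
    exact_mod_cast Nat.choose_succ_succ' (s + j) j
  have habsorb : ((s + j + 1).choose (j + 1) : ℤ) * (j + 1) = (s + j + 1).choose j * (s + 1) := by
    have := Nat.choose_succ_right_eq (s + j + 1) j
    rw [show s + j + 1 - j = s + 1 by omega] at this
    exact_mod_cast this
  simp only [chooseShift]
  rw [show s + (j + 1) = s + j + 1 by ring, show s + 1 + j = s + j + 1 by ring,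
    shiftedRStirling2_succ_succ]
  push_cast
  linear_combination shiftedRStirling2 r (n + 1) (s + j) * hpascal +
    shiftedRStirling2 r n (s + j + 1) * habsorb

def stirlingAltSum (n p s : ℕ) : ℤ :=
  altChooseSum (n + p + s) p (chooseShift s (shiftedRStirling2 r n))

theorem stirlingAltSum_succ_succ_zero (n p : ℕ) :
    stirlingAltSum r (n + 1) (p + 1) 0 =
      r * stirlingAltSum r n (p + 1) 0 - stirlingAltSum r n p 1 := by
  simp only [stirlingAltSum]
  rw [show n + 1 + (p + 1) + 0 = n + p + 1 + 1 by ring, show n + (p + 1) + 0 = n + p + 1 by ring,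
    altChooseSum_succ_succ_of_eq_add (u := fun j => r * chooseShift 0 (shiftedRStirling2 r n) j)
      (v := chooseShift 1 (shiftedRStirling2 r n))
      (by simp [chooseShift, shiftedRStirling2_succ_zero])
      (fun j => by simpa using chooseShift_shiftedRStirling2_succ r n 0 j),
    altChooseSum_const_mul]

theorem stirlingAltSum_succ_succ_succ (n p s : ℕ) :
    stirlingAltSum r (n + 1) (p + 1) (s + 1) =
      stirlingAltSum r (n + 1) (p + 1) s + (r + s + 1) * stirlingAltSum r n (p + 1) (s + 1) -
        (s + 2) * stirlingAltSum r n p (s + 2) := by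
  simp only [stirlingAltSum]
  rw [show n + 1 + (p + 1) + (s + 1) = n + 1 + (p + 1) + s + 1 by ring,
    show n + (p + 1) + (s + 1) = n + 1 + (p + 1) + s by ring,
    show n + p + (s + 2) = n + 1 + (p + 1) + s by ring,
    altChooseSum_succ_succ_of_eq_add
      (u := fun j => chooseShift s (shiftedRStirling2 r (n + 1)) j +
        (r + s + 1) * chooseShift (s + 1) (shiftedRStirling2 r n) j)
      (v := fun j => (s + 2) * chooseShift (s + 2) (shiftedRStirling2 r n) j)
      (by simp [chooseShift, shiftedRStirling2_succ_succ])
      (fun j => by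
        rw [chooseShift_shiftedRStirling2_succ]
        simp only [chooseShift]
        rw [show s + (j + 1) = s + 1 + j by ring]
        push_cast
        ring),
    altChooseSum_add, altChooseSum_const_mul, altChooseSum_const_mul]

theorem stirlingAltSum_eq_zero {n p : ℕ} (h : n < p) (s : ℕ) : stirlingAltSum r n p s = 0 := by
  induction n generalizing p s with
  | zero =>
    obtain ⟨p, rfl⟩ : ∃ p', p = p' + 1 := ⟨p - 1, by omega⟩
    have hV : chooseShift s (shiftedRStirling2 r 0) = fun j => ((s + j).choose j : ℤ) :=
      funext fun j => by simp [chooseShift, shiftedRStirling2_zero_left]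
    rw [stirlingAltSum, hV, show 0 + (p + 1) + s = p + s + 1 by ring, altChooseSum_choose_add,
      Nat.choose_succ_self, Nat.cast_zero]
  | succ n ih =>
    obtain ⟨p, rfl⟩ : ∃ p', p = p' + 1 := ⟨p - 1, by omega⟩
    induction s with
    | zero => rw [stirlingAltSum_succ_succ_zero, ih (by omega), ih (by omega), mul_zero, sub_zero]
    | succ s ihs =>
      rw [stirlingAltSum_succ_succ_succ, ihs, ih (by omega), ih (by omega)]
      ring

end ShiftedRStirling2

theorem rStirling2_power_identity (n p q r : ℕ) (hp : n ≤ p) :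
    ∑ j ∈ Finset.range (p + 1),
      (-1 : ℤ) ^ j * ((n + p + q + 1).choose (p - j)) * ((q + j).choose j) *
        rStirling2 r (n + r + q + 1 + j) (r + q + 1 + j)
    = ((n + p + q + 1).choose n : ℤ) * (r : ℤ) ^ n := by
  have htail : ∀ a ∈ range (p + q + 1 + 1), a ∉ range (p + 1) →
      altChooseSum (n + p + q + 1) a (chooseShift (p + q + 1 - a) (shiftedRStirling2 r n)) = 0 := by
    intro a ha hna
    rw [mem_range] at ha hna
    rw [show n + p + q + 1 = n + a + (p + q + 1 - a) by omega]
    exact stirlingAltSum_eq_zero r (by omega) _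
  calc _ = altChooseSum (n + p + q + 1) p (chooseShift q fun m => shiftedRStirling2 r n (m + 1)) :=
        sum_congr rfl fun j _ => by
          rw [chooseShift, shiftedRStirling2, show n + r + (q + j + 1) = n + r + q + 1 + j by ring,
            show r + (q + j + 1) = r + q + 1 + j by ring]
          ring
    _ = ∑ a ∈ range (p + q + 1 + 1),
          altChooseSum (n + p + q + 1) a (chooseShift (p + q + 1 - a) (shiftedRStirling2 r n)) := by
        rw [altChooseSum_chooseShift_comp_succ, sum_subset (range_subset_range.2 (by omega)) htail]
    _ = _ := by
        rw [sum_altChooseSum_chooseShift_sub, shiftedRStirling2_zero_right,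
          Nat.choose_symm_of_eq_add (show n + p + q + 1 = p + q + 1 + n by ring)]
end

section
/- For every non-negative integer n, the n-th Bernoulli number of the second kind b_n satisfies b_n = (n+1) * C(2n, n)^{-1} * ∑_{j=0}^{n} ((-1)^{n+j} / (j+1)) * C(2n, n+j) * s(n+j, j), where s denotes the unsigned Stirling number of the first kind. -/
/-- The unsigned Stirling number of the first kind. -/
def stirling1 (n k : ℕ) : ℕ := rStirling1 0 n k

/-- The Bernoulli numbers of the second kind, defined by
`t / log (1+t) = ∑ b n * t^n / n!`, i.e. as `n!` times the coefficients of the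
inverse of the power series `log(1+t)/t = ∑ (-1)^i t^i/(i+1)`. -/
noncomputable def bernoulliSecond (n : ℕ) : ℚ :=
  (n.factorial : ℚ) *
    PowerSeries.coeff (R := ℚ) n (PowerSeries.mk fun i => (-1 : ℚ) ^ i / (i + 1))⁻¹

open Nat PowerSeries Finset

lemma stirling1_eq_stirlingFirst : stirling1 = Nat.stirlingFirst := by
  ext n k
  induction n generalizing k with
  | zero => cases k <;> simp [stirling1, rStirling1]
  | succ n ih =>
    cases k with
    | zero =>
      have := ih 0
      cases n <;> simp_all [stirling1, rStirling1]
    | succ k => simp [stirling1, rStirling1, stirlingFirst_succ_succ, ← ih]; ring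

lemma choose_two_mul_add_mul_factorial (n j : ℕ) (h : j ≤ n) :
    (n + 1) * (2 * n).choose (n + j) * (n + j)! =
      (2 * n).choose n * (n + 1).choose (j + 1) * (j + 1)! * n ! := by
  have h1 := choose_mul_factorial_mul_factorial (show n + j ≤ 2 * n by omega)
  have h2 := choose_mul_factorial_mul_factorial (show n ≤ 2 * n by omega)
  have h3 := choose_mul_factorial_mul_factorial (show j + 1 ≤ n + 1 by omega)
  rw [show 2 * n - (n + j) = n - j by omega] at h1
  rw [show 2 * n - n = n by omega] at h2
  rw [Nat.add_sub_add_right, factorial_succ n] at h3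
  apply Nat.eq_of_mul_eq_mul_right (factorial_pos (n - j))
  linear_combination (n + 1) * h1 - (2 * n).choose n * n ! * h3 - (n + 1) * h2

lemma mul_sum_neg_one_pow_mul_choose_mul_pow {R : Type*} [CommRing R] (x : R) (n : ℕ) :
    x * ∑ j ∈ range (n + 1), (-1) ^ j * ((n + 1).choose (j + 1) : R) * x ^ j =
      1 - (1 - x) ^ (n + 1) := by
  rw [sub_eq_neg_add 1 x, add_pow, sum_range_succ' _ (n + 1), mul_sum]
  simp only [one_pow, mul_one, pow_zero, choose_zero_right, cast_one, neg_pow x]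
  rw [sub_add_cancel_right, ← sum_neg_distrib]
  refine sum_congr rfl fun j _ => ?_
  ring

namespace PowerSeries

lemma coeff_one_add_X_mul_derivative {R : Type*} [CommSemiring R] (f : R⟦X⟧) (m : ℕ) :
    coeff m ((1 + X) * d⁄dX R f) = (m + 1) * coeff (m + 1) f + m * coeff m f := by
  rw [add_mul, one_mul, map_add, coeff_derivative]
  cases m with
  | zero => simp
  | succ m => rw [coeff_succ_X_mul, coeff_derivative]; push_cast; ring

lemma coeff_inv_eq_sum_choose_mul_coeff_pow {K : Type*} [Field K] {g : K⟦X⟧}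
    (hg : constantCoeff g = 1) (n : ℕ) :
    coeff n g⁻¹ = ∑ j ∈ range (n + 1), (-1) ^ j * (n + 1).choose (j + 1) * coeff n (g ^ j) := by
  have hinv : g⁻¹ * g = 1 := PowerSeries.inv_mul_cancel _ (by simp [hg])
  have hsum : ∑ j ∈ range (n + 1), (-1) ^ j * ((n + 1).choose (j + 1) : K⟦X⟧) * g ^ j =
      g⁻¹ - g⁻¹ * (1 - g) ^ (n + 1) := by
    rw [← mul_one_sub, ← mul_sum_neg_one_pow_mul_choose_mul_pow, ← mul_assoc, hinv, one_mul]
  have hdvd : X ^ (n + 1) ∣ g⁻¹ * (1 - g) ^ (n + 1) :=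
    (pow_dvd_pow_of_dvd (X_dvd_iff.mpr (by simp [hg])) _).mul_left _
  have hcoeff := congrArg (coeff n) hsum
  rw [map_sub, X_pow_dvd_iff.mp hdvd n n.lt_succ_self, sub_zero, map_sum] at hcoeff
  rw [← hcoeff]
  refine sum_congr rfl fun j _ => ?_
  rw [← map_natCast (C (R := K)), ← map_one (C (R := K)), ← map_neg, ← map_pow, ← map_mul,
    coeff_C_mul]

end PowerSeries

section LogOneAdd

variable (K : Type*) [Field K] [CharZero K]

noncomputable def logOneAddDivX : K⟦X⟧ := mk fun i => (-1 : K) ^ i / (i + 1)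

noncomputable def logOneAdd : K⟦X⟧ := X * logOneAddDivX K

variable {K}

@[simp] lemma constantCoeff_logOneAddDivX : constantCoeff (logOneAddDivX K) = 1 := by
  simp [logOneAddDivX, ← coeff_zero_eq_constantCoeff_apply]

@[simp] lemma constantCoeff_logOneAdd : constantCoeff (logOneAdd K) = 0 := by
  simp [logOneAdd]

lemma one_add_X_mul_derivative_logOneAdd : (1 + X) * d⁄dX K (logOneAdd K) = 1 := by
  ext n
  rw [coeff_one_add_X_mul_derivative]
  cases n with
  | zero => simp [logOneAdd, logOneAddDivX]
  | succ n =>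
    simp only [logOneAdd, logOneAddDivX, coeff_succ_X_mul, coeff_mk, coeff_one, pow_succ]
    have h : ((n + 1 : ℕ) : K) + 1 ≠ 0 := cast_add_one_ne_zero _
    push_cast at h ⊢
    field_simp
    simp

lemma one_add_X_mul_derivative_logOneAdd_pow (j : ℕ) :
    (1 + X) * d⁄dX K (logOneAdd K ^ (j + 1)) = ((j : K⟦X⟧) + 1) * logOneAdd K ^ j := by
  rw [Derivation.leibniz_pow, Nat.add_sub_cancel, smul_eq_mul, nsmul_eq_mul]
  push_cast
  linear_combination (((j : K⟦X⟧) + 1) * logOneAdd K ^ j) * one_add_X_mul_derivative_logOneAdd (K := K)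

lemma factorial_mul_coeff_logOneAdd_pow (j m : ℕ) :
    (m ! : K) * coeff m (logOneAdd K ^ j) = (-1) ^ (m + j) * m.stirlingFirst j * j ! := by
  induction j generalizing m with
  | zero => cases m <;> simp [coeff_one]
  | succ j ihj =>
    induction m with
    | zero => simp [coeff_zero_eq_constantCoeff]
    | succ m ihm =>
      have key := congrArg (coeff m) (one_add_X_mul_derivative_logOneAdd_pow (K := K) j)
      rw [coeff_one_add_X_mul_derivative, ← map_natCast (C (R := K)), ← map_one (C (R := K)),
        ← map_add, coeff_C_mul] at key
      rw [factorial_succ j] at ihm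
      rw [stirlingFirst_succ_succ, factorial_succ m, factorial_succ j]
      push_cast at key ihm ⊢
      linear_combination (m ! : K) * key + ((j : K) + 1) * ihj m - (m : K) * ihm

lemma coeff_logOneAddDivX_pow (n j : ℕ) :
    coeff n (logOneAddDivX K ^ j) = (-1) ^ n * (n + j).stirlingFirst j * j ! / (n + j)! := by
  have h := factorial_mul_coeff_logOneAdd_pow (K := K) j (n + j)
  rw [logOneAdd, mul_pow, coeff_X_pow_mul, add_assoc, ← two_mul, pow_add, pow_mul, neg_one_sq,
    one_pow, mul_one] at h
  rw [eq_div_iff (cast_ne_zero.mpr (factorial_ne_zero _)), mul_comm, h]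

end LogOneAdd

theorem bernoulliSecond_eq_sum_stirling1 (n : ℕ) :
    bernoulliSecond n = ((n : ℚ) + 1) * (((2 * n).choose n : ℚ))⁻¹ *
      ∑ j ∈ Finset.range (n + 1),
        ((-1 : ℚ) ^ (n + j) / (j + 1)) * ((2 * n).choose (n + j)) *
          stirling1 (n + j) j := by
  change (n ! : ℚ) * coeff n (logOneAddDivX ℚ)⁻¹ = _
  rw [coeff_inv_eq_sum_choose_mul_coeff_pow constantCoeff_logOneAddDivX, mul_sum, mul_sum]
  refine sum_congr rfl fun j hj => ?_
  have hchoose : ((n + 1) * (2 * n).choose (n + j) * (n + j)! : ℚ) =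
      (2 * n).choose n * (n + 1).choose (j + 1) * (j + 1)! * n ! := by
    exact_mod_cast choose_two_mul_add_mul_factorial n j (mem_range_succ_iff.mp hj)
  rw [coeff_logOneAddDivX_pow, stirling1_eq_stirlingFirst]
  have hcentral : ((2 * n).choose n : ℚ) ≠ 0 := by exact_mod_cast (choose_pos (by omega)).ne'
  field_simp [hcentral]
  push_cast [factorial_succ j] at hchoose
  linear_combination -(-1) ^ (n + j) * ((n + j).stirlingFirst j : ℚ) * hchoose
end
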